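/- Let m ≥ 1, σ ∈ (0,2), Y > 0, T > 0. Let w : [0,Y] × [0,T] → [0,∞), set u(t) = w(0,t)^{1/m}, and assume: u is twice differentiable on [0,T] with |u''| ≤ M; there are a function d : [0,T] → ℝ and a constant K ≥ 0 such that |ν_σ (w(y,t) − w(0,t))/y^σ − d(t)| ≤ K y^{2−σ} for all y ∈ (0,Y] and t ∈ [0,T]; and u'(t) = d(t) for all t ∈ [0,T]. Then there exists C > 0 (depending only on K and M) such that for all Δx ∈ (0,Y], Δt > 0 and t ∈ [0,T] with t + Δt ≤ T: | ν_σ (Δt/Δx^σ)(w(Δx,t) − w(0,t)) + u(t) − u(t+Δt) | ≤ C Δt (Δt + Δx^{2−σ}). -/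

import Mathlib

/-!
Write `q = ν_σ (w(Δx,t) - w(0,t)) / Δx^σ`. The truncation error equals
`Δt (q - d(t)) - (u(t+Δt) - u(t) - u'(t) Δt)` because `u' = d`. The first term is at most
`K Δt Δx^{2-σ}` by the approximation hypothesis, the second at most `M Δt²` by a first-order
Taylor estimate for `u`, so `C = K + M + 1` works.
-/

/-- `ν_σ = σ μ_σ` with `μ_σ = 2^{σ-1} Γ(σ/2) / Γ(1-σ/2)`. -/
noncomputable def nuSigma (σ : ℝ) : ℝ :=
  σ * (2 ^ (σ - 1) * Real.Gamma (σ / 2) / Real.Gamma (1 - σ / 2))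

theorem Convex.abs_sub_sub_mul_le_of_abs_deriv_deriv_le {f f' f'' : ℝ → ℝ} {s : Set ℝ} {M : ℝ}
    (hs : Convex ℝ s) (hf : ∀ x ∈ s, HasDerivWithinAt f (f' x) s x)
    (hf' : ∀ x ∈ s, HasDerivWithinAt f' (f'' x) s x) (hM : ∀ x ∈ s, |f'' x| ≤ M)
    {a b : ℝ} (ha : a ∈ s) (hb : b ∈ s) :
    |f b - f a - f' a * (b - a)| ≤ M * |b - a| ^ 2 := by
  have hI : Set.uIcc a b ⊆ s := hs.ordConnected.uIcc_subset ha hb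
  have hM₀ : 0 ≤ M := (abs_nonneg _).trans (hM a ha)
  have hlip : ∀ x ∈ Set.uIcc a b, ‖f' x - f' a‖ ≤ M * |b - a| := fun x hx =>
    calc ‖f' x - f' a‖ ≤ M * ‖x - a‖ :=
          hs.norm_image_sub_le_of_norm_hasDerivWithin_le hf' hM ha (hI hx)
      _ ≤ M * |b - a| := mul_le_mul_of_nonneg_left (Set.abs_sub_left_of_mem_uIcc hx) hM₀
  have hg : ∀ x ∈ Set.uIcc a b,
      HasDerivWithinAt (fun y => f y - f' a * y) (f' x - f' a) (Set.uIcc a b) x := fun x hx => by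
    have h := ((hf x (hI hx)).mono hI).sub ((hasDerivWithinAt_id x _).const_mul (f' a))
    rwa [mul_one] at h
  have := convex_uIcc a b |>.norm_image_sub_le_of_norm_hasDerivWithin_le hg hlip
    Set.left_mem_uIcc Set.right_mem_uIcc
  calc |f b - f a - f' a * (b - a)| = ‖f b - f' a * b - (f a - f' a * a)‖ := by
        rw [Real.norm_eq_abs]; congr 1; ring
    _ ≤ M * |b - a| * ‖b - a‖ := this
    _ = M * |b - a| ^ 2 := by rw [Real.norm_eq_abs]; ring

theorem stmt14_general (σ Y T : ℝ)
    (w : ℝ → ℝ → ℝ)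
    (u u' u'' d : ℝ → ℝ) (M K : ℝ) (hM : 0 ≤ M) (hK : 0 ≤ K)
    (hder1 : ∀ t ∈ Set.Icc (0:ℝ) T, HasDerivWithinAt u (u' t) (Set.Icc 0 T) t)
    (hder2 : ∀ t ∈ Set.Icc (0:ℝ) T, HasDerivWithinAt u' (u'' t) (Set.Icc 0 T) t)
    (hu'' : ∀ t ∈ Set.Icc (0:ℝ) T, |u'' t| ≤ M)
    (happr : ∀ y ∈ Set.Ioc (0:ℝ) Y, ∀ t ∈ Set.Icc (0:ℝ) T,
      |nuSigma σ * (w y t - w 0 t) / y ^ σ - d t| ≤ K * y ^ (2 - σ))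
    (hud : ∀ t ∈ Set.Icc (0:ℝ) T, u' t = d t) :
    ∃ C > 0, ∀ Δx ∈ Set.Ioc (0:ℝ) Y, ∀ Δt > (0:ℝ), ∀ t ∈ Set.Icc (0:ℝ) T,
      t + Δt ≤ T →
      |nuSigma σ * (Δt / Δx ^ σ) * (w Δx t - w 0 t) + u t - u (t + Δt)|
        ≤ C * Δt * (Δt + Δx ^ (2 - σ)) := by
  refine ⟨K + M + 1, by positivity, fun Δx hΔx Δt hΔt t ht htT => ?_⟩
  set q := nuSigma σ * (w Δx t - w 0 t) / Δx ^ σ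
  have hq : |q - d t| ≤ K * Δx ^ (2 - σ) := happr Δx hΔx t ht
  have htaylor : |u (t + Δt) - u t - u' t * Δt| ≤ M * Δt ^ 2 := by
    simpa [abs_of_pos hΔt] using (convex_Icc 0 T).abs_sub_sub_mul_le_of_abs_deriv_deriv_le
      hder1 hder2 hu'' ht ⟨by linarith [ht.1], htT⟩
  have hsplit : nuSigma σ * (Δt / Δx ^ σ) * (w Δx t - w 0 t) + u t - u (t + Δt)
      = Δt * (q - d t) - (u (t + Δt) - u t - u' t * Δt) := by
    rw [hud t ht]; ring
  have hx : 0 ≤ Δx ^ (2 - σ) := Real.rpow_nonneg hΔx.1.le _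
  calc |nuSigma σ * (Δt / Δx ^ σ) * (w Δx t - w 0 t) + u t - u (t + Δt)|
      ≤ Δt * |q - d t| + |u (t + Δt) - u t - u' t * Δt| := by
        rw [hsplit]
        exact (abs_sub _ _).trans_eq (by rw [abs_mul, abs_of_pos hΔt])
    _ ≤ Δt * (K * Δx ^ (2 - σ)) + M * Δt ^ 2 := by gcongr
    _ ≤ (K + M + 1) * Δt * (Δt + Δx ^ (2 - σ)) := by
        nlinarith [mul_nonneg hK (mul_nonneg hΔt.le hΔt.le), mul_nonneg hM (mul_nonneg hΔt.le hx),
          mul_pos hΔt hΔt, mul_nonneg hΔt.le hx]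

/-- Boundary-node local truncation error (Theorem 4.2): if
`u(t) = w(0,t)^{1/m}` is twice differentiable with `|u''| ≤ M`, the two-point quotient
`ν_σ (w(y,t)-w(0,t))/y^σ` approximates a function `d(t)` with error `≤ K y^{2-σ}`, and
`u' = d`, then the truncation error of the explicit boundary update is
`O(Δt (Δt + Δx^{2-σ}))`. -/
theorem stmt14 (m σ Y T : ℝ) (hm : 1 ≤ m) (hσ : σ ∈ Set.Ioo (0:ℝ) 2)
    (hY : 0 < Y) (hT : 0 < T)
    (w : ℝ → ℝ → ℝ) (hw : ∀ y ∈ Set.Icc 0 Y, ∀ t ∈ Set.Icc 0 T, 0 ≤ w y t)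
    (u u' u'' d : ℝ → ℝ) (M K : ℝ) (hM : 0 ≤ M) (hK : 0 ≤ K)
    (hu : ∀ t, u t = (w 0 t) ^ (1/m))
    (hder1 : ∀ t ∈ Set.Icc (0:ℝ) T, HasDerivWithinAt u (u' t) (Set.Icc 0 T) t)
    (hder2 : ∀ t ∈ Set.Icc (0:ℝ) T, HasDerivWithinAt u' (u'' t) (Set.Icc 0 T) t)
    (hu'' : ∀ t ∈ Set.Icc (0:ℝ) T, |u'' t| ≤ M)
    (happr : ∀ y ∈ Set.Ioc (0:ℝ) Y, ∀ t ∈ Set.Icc (0:ℝ) T,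
      |nuSigma σ * (w y t - w 0 t) / y ^ σ - d t| ≤ K * y ^ (2 - σ))
    (hud : ∀ t ∈ Set.Icc (0:ℝ) T, u' t = d t) :
    ∃ C > 0, ∀ Δx ∈ Set.Ioc (0:ℝ) Y, ∀ Δt > (0:ℝ), ∀ t ∈ Set.Icc (0:ℝ) T,
      t + Δt ≤ T →
      |nuSigma σ * (Δt / Δx ^ σ) * (w Δx t - w 0 t) + u t - u (t + Δt)|
        ≤ C * Δt * (Δt + Δx ^ (2 - σ)) :=
  stmt14_general σ Y T w u u' u'' d M K hM hK hder1 hder2 hu'' happr hud
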